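/- arXiv:2502.01178 — 2 statements merged into one kernel-verified Lean document; each statement's English description precedes it below -/
import Mathlib

section
/- In the biparental Moran model with viability selection, the rescaled triplet Z_n = (Y_n/N, U_n/N, V_n/N) satisfies, for every n ≥ 0: (a) ‖Z_{n+1} − Z_n‖ ≤ √3/N almost surely, and (b) 𝔼(Z_{n+1} − Z_n | ℱ_n) = (1/N) g(Z_n), where g(y,u,v) = ( s y(1−y)/(y+(1+s)(1−y)), u/2 + (u+v)y/2 − u/(y+(1+s)(1−y)), v/2 + (u+v)(1−y)/2 − (1+s)v/(y+(1+s)(1−y)) ). -/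
open MeasureTheory Filter

/-- The biparental Moran model with viability selection on a population of size `N`
with selection parameter `s`, realized on a probability space `Ω`.
`W n` is the matrix of genetic weights, `Y n` the set of advantaged individuals,
`mo n`, `fa n`, `ka n` the positions of the mother, father and killed individual
at time step `n`. -/
structure MoranModel (N : ℕ) (s : ℝ) (Ω : Type) [MeasurableSpace Ω] where
  P : Measure Ω
  isProb : IsProbabilityMeasure P
  W : ℕ → Ω → Fin N → Fin N → ℝ
  Y : ℕ → Ω → Finset (Fin N)
  mo : ℕ → Ω → Fin N
  fa : ℕ → Ω → Fin N
  ka : ℕ → Ω → Fin N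
  meas_W : ∀ n, Measurable (W n)
  meas_Y : ∀ n (A : Set (Finset (Fin N))), MeasurableSet (Y n ⁻¹' A)
  meas_mo : ∀ n, Measurable (mo n)
  meas_fa : ∀ n, Measurable (fa n)
  meas_ka : ∀ n, Measurable (ka n)
  W_init : ∀ ω i j, W 0 ω i j = if i = j then (1 : ℝ) else 0
  Y_rec : ∀ n ω, Y (n + 1) ω =
    if mo n ω ∈ Y n ω then insert (ka n ω) (Y n ω) else (Y n ω).erase (ka n ω)
  W_rec : ∀ n ω i j, W (n + 1) ω i j =
    if i = ka n ω then (W n ω (mo n ω) j + W n ω (fa n ω) j) / 2 else W n ω i j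
  /-- Conditionally on the natural filtration of the chain `(W, Y)`, the mother and
  father are uniform on the population, and independently the killed individual `k` is
  chosen with probability proportional to `1 + s` if disadvantaged, `1` if advantaged. -/
  law : ∀ (n : ℕ) (A : Set Ω),
    MeasurableSet[⨆ k ∈ Set.Iic n,
      (MeasurableSpace.comap (W k) inferInstance ⊔ MeasurableSpace.comap (Y k) ⊤)] A →
    ∀ i j k : Fin N,
      (P (A ∩ {ω | mo n ω = i ∧ fa n ω = j ∧ ka n ω = k})).toReal =
        (1 / (N : ℝ) ^ 2) *
          ∫ ω in A, (1 + s * (if k ∈ Y n ω then 0 else 1)) /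
            (((Y n ω).card : ℝ) + (1 + s) * ((N : ℝ) - ((Y n ω).card : ℝ))) ∂P

/-- The natural filtration of the chain `(W, Y)`. -/
def MoranModel.F {N : ℕ} {s : ℝ} {Ω : Type} [MeasurableSpace Ω]
    (M : MoranModel N s Ω) (n : ℕ) : MeasurableSpace Ω :=
  ⨆ k ∈ Set.Iic n,
    (MeasurableSpace.comap (M.W k) inferInstance ⊔ MeasurableSpace.comap (M.Y k) ⊤)


/-- `U n`, the total genetic weight of the initially advantaged ancestors among the
advantaged individuals at time `n`. -/
noncomputable def MoranModel.U {N : ℕ} {s : ℝ} {Ω : Type} [MeasurableSpace Ω]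
    (M : MoranModel N s Ω) (n : ℕ) (ω : Ω) : ℝ :=
  ∑ l ∈ M.Y n ω, ∑ l' ∈ M.Y 0 ω, M.W n ω l l'

/-- `V n`, the total genetic weight of the initially advantaged ancestors among the
disadvantaged individuals at time `n`. -/
noncomputable def MoranModel.V {N : ℕ} {s : ℝ} {Ω : Type} [MeasurableSpace Ω]
    (M : MoranModel N s Ω) (n : ℕ) (ω : Ω) : ℝ :=
  ∑ l ∈ (M.Y n ω)ᶜ, ∑ l' ∈ M.Y 0 ω, M.W n ω l l'

/-- The rescaled triplet `Zₙ = (Yₙ/N, Uₙ/N, Vₙ/N) ∈ [0,1]³`. -/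
noncomputable def MoranModel.Z {N : ℕ} {s : ℝ} {Ω : Type} [MeasurableSpace Ω]
    (M : MoranModel N s Ω) (n : ℕ) (ω : Ω) : ℝ × ℝ × ℝ :=
  (((M.Y n ω).card : ℝ) / N, M.U n ω / N, M.V n ω / N)

/-- The Euclidean norm on `ℝ³`. -/
noncomputable def norm3 (p : ℝ × ℝ × ℝ) : ℝ :=
  Real.sqrt (p.1 ^ 2 + p.2.1 ^ 2 + p.2.2 ^ 2)

/-- The drift function `g` of the limiting dynamical system. -/
noncomputable def gdrift (s : ℝ) (p : ℝ × ℝ × ℝ) : ℝ × ℝ × ℝ :=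
  (s * p.1 * (1 - p.1) / (p.1 + (1 + s) * (1 - p.1)),
   p.2.1 / 2 + (p.2.1 + p.2.2) * p.1 / 2 - p.2.1 / (p.1 + (1 + s) * (1 - p.1)),
   p.2.2 / 2 + (p.2.1 + p.2.2) * (1 - p.1) / 2 -
     (1 + s) * p.2.2 / (p.1 + (1 + s) * (1 - p.1)))


/-!
Write `Rₙ l = ∑ l' ∈ 𝒴₀, Wₙ(l, l')` for the score of individual `l`; then `Uₙ` and `Vₙ` are the
sums of `Rₙ` over `𝒴ₙ` and over its complement, and `0 ≤ Rₙ ≤ 1` because `Wₙ` is row-stochastic.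
A step replaces `Rₙ κ` by `(Rₙ μ + Rₙ π) / 2` and puts `κ` into `𝒴` iff `μ ∈ 𝒴`, so
`N (Z_{n+1} - Zₙ)` is a function of `(𝒴ₙ, Rₙ)` and of the draw `(μ, π, κ)`, with coordinates in
`[-1, 1]`; this gives (a). Given `ℱₙ`, the draw has the explicit law `N⁻² w(κ)`, so the
conditional expectation is the finite average `∑ N⁻² w(k) Δ(i, j, k)`, and summing first over the
parents and then over `k` identifies it with `g(Zₙ)`.
-/

namespace Finset

variable {α : Type*} [DecidableEq α]

/-- `T` after `k` is replaced by an offspring of the mother `i`, who passes on membership. -/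
def replaceOffspring (T : Finset α) (i k : α) : Finset α :=
  if i ∈ T then insert k T else T.erase k

lemma compl_replaceOffspring [Fintype α] (T : Finset α) (i k : α) :
    (T.replaceOffspring i k)ᶜ = Tᶜ.replaceOffspring i k := by
  by_cases hi : i ∈ T <;> simp [replaceOffspring, hi, compl_insert, compl_erase]

noncomputable def sumChange (T : Finset α) (R : α → ℝ) (i j k : α) : ℝ :=
  (if i ∈ T then (R i + R j) / 2 else 0) - (if k ∈ T then R k else 0)

lemma sum_erase_eq_sub_ite (T : Finset α) (R : α → ℝ) (k : α) :
    ∑ l ∈ T.erase k, R l = ∑ l ∈ T, R l - if k ∈ T then R k else 0 := by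
  split_ifs with hk
  · exact sum_erase_eq_sub hk
  · rw [erase_eq_of_notMem hk, sub_zero]

lemma sum_replaceOffspring_update (T : Finset α) (R : α → ℝ) (i j k : α) :
    ∑ l ∈ T.replaceOffspring i k, Function.update R k ((R i + R j) / 2) l
      = ∑ l ∈ T, R l + T.sumChange R i j k := by
  unfold replaceOffspring sumChange
  by_cases hi : i ∈ T
  · rw [if_pos hi, if_pos hi, sum_update_of_mem (mem_insert_self k T),
      sdiff_singleton_eq_erase, erase_insert_eq_erase, sum_erase_eq_sub_ite]
    ring
  · rw [if_neg hi, if_neg hi, sum_update_of_notMem (notMem_erase k T), sum_erase_eq_sub_ite]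
    ring

lemma card_replaceOffspring (T : Finset α) (i j k : α) :
    ((T.replaceOffspring i k).card : ℝ) = T.card + T.sumChange 1 i j k := by
  have h := sum_replaceOffspring_update T 1 i j k
  rw [Pi.one_apply, Pi.one_apply, show ((1 : ℝ) + 1) / 2 = 1 by norm_num] at h
  simpa using h

lemma abs_sumChange_le {T : Finset α} {R : α → ℝ} (hR : ∀ l, R l ∈ Set.Icc 0 1) (i j k : α) :
    |T.sumChange R i j k| ≤ 1 := by
  obtain ⟨hi0, hi1⟩ := hR i
  obtain ⟨hj0, hj1⟩ := hR j
  obtain ⟨hk0, hk1⟩ := hR k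
  unfold sumChange
  rw [abs_le]
  constructor <;> split_ifs <;> linarith

lemma measurable_sumChange (T : Finset α) (i j k : α) :
    Measurable fun R : α → ℝ => T.sumChange R i j k := by
  unfold sumChange
  split_ifs <;> fun_prop

end Finset

section Selection

variable {N : ℕ} {s : ℝ}

lemma cast_card_compl (S : Finset (Fin N)) : (Sᶜ.card : ℝ) = N - S.card := by
  rw [eq_sub_iff_add_eq', ← Nat.cast_add, Finset.card_add_card_compl, Fintype.card_fin]

noncomputable def killWeight (N : ℕ) (s : ℝ) (S : Finset (Fin N)) (k : Fin N) : ℝ :=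
  (1 + s * (if k ∈ S then 0 else 1)) / ((S.card : ℝ) + (1 + s) * ((N : ℝ) - (S.card : ℝ)))

lemma killWeight_denom_pos (hN : 0 < N) (hs : -1 < s) (S : Finset (Fin N)) :
    0 < (S.card : ℝ) + (1 + s) * ((N : ℝ) - (S.card : ℝ)) := by
  have hSN : (S.card : ℝ) ≤ N := by
    exact_mod_cast (Finset.card_le_univ S).trans_eq (Fintype.card_fin N)
  have hN' : (0 : ℝ) < N := by exact_mod_cast hN
  rcases S.card.eq_zero_or_pos with h | h
  · rw [h, Nat.cast_zero]
    nlinarith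
  · have : (1 : ℝ) ≤ S.card := by exact_mod_cast h
    nlinarith

lemma killWeight_nonneg (hN : 0 < N) (hs : -1 < s) (S : Finset (Fin N)) (k : Fin N) :
    0 ≤ killWeight N s S k := by
  refine div_nonneg ?_ (killWeight_denom_pos hN hs S).le
  split_ifs <;> linarith

lemma sum_killWeight (hN : 0 < N) (hs : -1 < s) (S : Finset (Fin N)) :
    ∑ k, killWeight N s S k = 1 := by
  simp only [killWeight]
  rw [← Finset.sum_div, div_eq_one_iff_eq (killWeight_denom_pos hN hs S).ne']
  simp [Finset.sum_add_distrib, Finset.sum_ite, ← Finset.compl_filter, cast_card_compl]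
  ring

lemma killWeight_le_one (hN : 0 < N) (hs : -1 < s) (S : Finset (Fin N)) (k : Fin N) :
    killWeight N s S k ≤ 1 :=
  sum_killWeight hN hs S ▸
    Finset.single_le_sum (fun k _ => killWeight_nonneg hN hs S k) (Finset.mem_univ k)

lemma sum_killWeight_mul (S : Finset (Fin N)) (R : Fin N → ℝ) :
    ∑ k ∈ S, killWeight N s S k * R k
      = (∑ k ∈ S, R k) / ((S.card : ℝ) + (1 + s) * ((N : ℝ) - (S.card : ℝ))) := by
  rw [Finset.sum_div]
  refine Finset.sum_congr rfl fun k hk => ?_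
  rw [killWeight, if_pos hk]
  ring

lemma sum_compl_killWeight_mul (S : Finset (Fin N)) (R : Fin N → ℝ) :
    ∑ k ∈ Sᶜ, killWeight N s S k * R k
      = (1 + s) * (∑ k ∈ Sᶜ, R k) / ((S.card : ℝ) + (1 + s) * ((N : ℝ) - (S.card : ℝ))) := by
  rw [Finset.mul_sum, Finset.sum_div]
  refine Finset.sum_congr rfl fun k hk => ?_
  rw [killWeight, if_neg (Finset.mem_compl.1 hk)]
  ring

lemma sum_sum_ite_mem_mean (T : Finset (Fin N)) (R : Fin N → ℝ) :
    ∑ i, ∑ j, (if i ∈ T then (R i + R j) / 2 else 0)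
      = (N * ∑ l ∈ T, R l + T.card * ∑ l, R l) / 2 := by
  have hrow : ∀ i, ∑ j, (R i + R j) / 2 = (N * R i + ∑ l, R l) / 2 := by
    intro i
    simp [← Finset.sum_div, Finset.sum_add_distrib]
  simp only [Finset.sum_ite_irrel, Finset.sum_const_zero, hrow, Finset.sum_ite_mem,
    Finset.univ_inter, ← Finset.sum_div, Finset.sum_add_distrib, ← Finset.mul_sum,
    Finset.sum_const, nsmul_eq_mul]

lemma sum_killWeight_mul_sumChange (hN : 0 < N) (hs : -1 < s) (S T : Finset (Fin N))
    (R : Fin N → ℝ) :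
    ∑ p : Fin N × Fin N × Fin N,
        killWeight N s S p.2.2 / N ^ 2 * T.sumChange R p.1 p.2.1 p.2.2
      = (N * ∑ l ∈ T, R l + T.card * ∑ l, R l) / (2 * N ^ 2)
        - ∑ k ∈ T, killWeight N s S k * R k := by
  have hN' : (N : ℝ) ≠ 0 := by exact_mod_cast hN.ne'
  simp only [Fintype.sum_prod_type, Finset.sumChange, mul_sub, Finset.sum_sub_distrib]
  congr 1
  · simp only [← Finset.sum_mul, ← Finset.sum_div, sum_killWeight hN hs, one_div,
      ← Finset.mul_sum, sum_sum_ite_mem_mean]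
    field_simp
  · simp only [Finset.sum_const, Finset.card_univ, Fintype.card_fin, nsmul_eq_mul, mul_ite,
      mul_zero, Finset.sum_ite_mem, Finset.univ_inter, div_mul_eq_mul_div, ← Finset.sum_div]
    field_simp

/-- The change of `(|Y|, U, V)` when the draw is `p = (mother, father, killed)`. -/
noncomputable def stepIncrement (S : Finset (Fin N)) (R : Fin N → ℝ)
    (p : Fin N × Fin N × Fin N) : ℝ × ℝ × ℝ :=
  (S.sumChange 1 p.1 p.2.1 p.2.2, S.sumChange R p.1 p.2.1 p.2.2, Sᶜ.sumChange R p.1 p.2.1 p.2.2)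

lemma sum_killWeight_smul_stepIncrement (hN : 0 < N) (hs : -1 < s) (S : Finset (Fin N))
    (R : Fin N → ℝ) :
    ∑ p, (killWeight N s S p.2.2 / N ^ 2) • stepIncrement S R p
      = gdrift s ((S.card : ℝ) / N, (∑ l ∈ S, R l) / N, (∑ l ∈ Sᶜ, R l) / N) := by
  have hD := (killWeight_denom_pos hN hs S).ne'
  have hN' : (N : ℝ) ≠ 0 := by exact_mod_cast hN.ne'
  have htot : ∑ l, R l = ∑ l ∈ S, R l + ∑ l ∈ Sᶜ, R l := (Finset.sum_add_sum_compl S R).symm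
  simp only [Prod.ext_iff, Prod.fst_sum, Prod.snd_sum, Prod.smul_fst, Prod.smul_snd, smul_eq_mul,
    stepIncrement, sum_killWeight_mul_sumChange hN hs, sum_killWeight_mul,
    sum_compl_killWeight_mul, cast_card_compl, gdrift, htot]
  simp only [Pi.one_apply, Finset.sum_const, nsmul_eq_mul, mul_one, Finset.card_univ,
    Fintype.card_fin]
  refine ⟨?_, ?_, ?_⟩ <;> field_simp
  ring

lemma measurable_stepIncrement (S : Finset (Fin N)) (p : Fin N × Fin N × Fin N) :
    Measurable fun R => stepIncrement S R p :=
  measurable_const.prodMk ((S.measurable_sumChange _ _ _).prodMk (Sᶜ.measurable_sumChange _ _ _))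

lemma norm_stepIncrement_le (S : Finset (Fin N)) {R : Fin N → ℝ}
    (hR : ∀ l, R l ∈ Set.Icc 0 1) (p : Fin N × Fin N × Fin N) : ‖stepIncrement S R p‖ ≤ 1 := by
  simp only [Prod.norm_def, stepIncrement, Real.norm_eq_abs]
  exact max_le (S.abs_sumChange_le (fun _ => ⟨zero_le_one, le_rfl⟩) _ _ _)
    (max_le (S.abs_sumChange_le hR _ _ _) (Sᶜ.abs_sumChange_le hR _ _ _))

end Selection

lemma norm3_le_sqrt_three_mul {p : ℝ × ℝ × ℝ} {c : ℝ} (h₁ : |p.1| ≤ c) (h₂ : |p.2.1| ≤ c)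
    (h₃ : |p.2.2| ≤ c) : norm3 p ≤ √3 * c := by
  have hc : 0 ≤ c := (abs_nonneg _).trans h₁
  have hsq (x : ℝ) (hx : |x| ≤ c) : x ^ 2 ≤ c ^ 2 :=
    sq_le_sq' (abs_le.1 hx).1 (abs_le.1 hx).2
  calc norm3 p ≤ √(3 * c ^ 2) := by
        unfold norm3
        gcongr
        linarith [hsq _ h₁, hsq _ h₂, hsq _ h₃]
    _ = √3 * c := by rw [Real.sqrt_mul zero_le_three, Real.sqrt_sq hc]

namespace MoranModel

variable {N : ℕ} {s : ℝ} {Ω : Type} [MeasurableSpace Ω] (M : MoranModel N s Ω)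

lemma W_nonneg (n : ℕ) (ω : Ω) (i j : Fin N) : 0 ≤ M.W n ω i j := by
  induction n generalizing i with
  | zero => rw [M.W_init]; split_ifs <;> norm_num
  | succ n ih =>
    rw [M.W_rec]
    split_ifs
    · linarith [ih (M.mo n ω), ih (M.fa n ω)]
    · exact ih i

lemma sum_W_eq_one (n : ℕ) (ω : Ω) (i : Fin N) : ∑ j, M.W n ω i j = 1 := by
  induction n generalizing i with
  | zero => simp [M.W_init]
  | succ n ih =>
    simp only [M.W_rec]
    split_ifs
    · rw [← Finset.sum_div, Finset.sum_add_distrib, ih, ih]; norm_num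
    · exact ih i

noncomputable def score (n : ℕ) (ω : Ω) (l : Fin N) : ℝ := ∑ l' ∈ M.Y 0 ω, M.W n ω l l'

def draw (n : ℕ) (ω : Ω) : Fin N × Fin N × Fin N := (M.mo n ω, M.fa n ω, M.ka n ω)

lemma score_mem_Icc (n : ℕ) (ω : Ω) (l : Fin N) : M.score n ω l ∈ Set.Icc 0 1 :=
  ⟨Finset.sum_nonneg fun l' _ => M.W_nonneg n ω l l',
    M.sum_W_eq_one n ω l ▸ Finset.sum_le_sum_of_subset_of_nonneg (Finset.subset_univ _)
      fun l' _ _ => M.W_nonneg n ω l l'⟩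

lemma score_succ (n : ℕ) (ω : Ω) :
    M.score (n + 1) ω = Function.update (M.score n ω) (M.ka n ω)
      ((M.score n ω (M.mo n ω) + M.score n ω (M.fa n ω)) / 2) := by
  ext l
  simp only [score, Function.update_apply, M.W_rec]
  split_ifs
  · rw [← Finset.sum_div, Finset.sum_add_distrib]
  · rfl

lemma Y_succ (n : ℕ) (ω : Ω) :
    M.Y (n + 1) ω = (M.Y n ω).replaceOffspring (M.mo n ω) (M.ka n ω) :=
  M.Y_rec n ω

lemma Z_eq (n : ℕ) (ω : Ω) :
    M.Z n ω = (((M.Y n ω).card : ℝ) / N, (∑ l ∈ M.Y n ω, M.score n ω l) / N,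
      (∑ l ∈ (M.Y n ω)ᶜ, M.score n ω l) / N) := rfl

lemma Z_succ_sub (n : ℕ) (ω : Ω) :
    M.Z (n + 1) ω - M.Z n ω
      = (1 / N : ℝ) • stepIncrement (M.Y n ω) (M.score n ω) (M.draw n ω) := by
  simp only [Z_eq, M.Y_succ, M.score_succ, Finset.card_replaceOffspring _ _ (M.fa n ω),
    Finset.compl_replaceOffspring, Finset.sum_replaceOffspring_update, stepIncrement, draw,
    Prod.mk_sub_mk, Prod.smul_mk, smul_eq_mul, Prod.mk.injEq]
  refine ⟨?_, ?_, ?_⟩ <;> ring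

lemma norm3_Z_succ_sub_le (n : ℕ) (ω : Ω) :
    norm3 (M.Z (n + 1) ω - M.Z n ω) ≤ √3 / N := by
  have hΔ (T : Finset (Fin N)) (R : Fin N → ℝ) (hR : ∀ l, R l ∈ Set.Icc 0 1) :
      |(1 / N : ℝ) * T.sumChange R (M.mo n ω) (M.fa n ω) (M.ka n ω)| ≤ 1 / N := by
    rw [abs_mul, abs_of_nonneg (by positivity)]
    exact mul_le_of_le_one_right (by positivity) (Finset.abs_sumChange_le hR _ _ _)
  rw [M.Z_succ_sub, div_eq_mul_one_div √3]
  exact norm3_le_sqrt_three_mul (hΔ _ 1 fun _ => ⟨zero_le_one, le_rfl⟩)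
    (hΔ _ _ (M.score_mem_Icc n ω)) (hΔ _ _ (M.score_mem_Icc n ω))

lemma comap_le_F {k n : ℕ} (hk : k ≤ n) :
    MeasurableSpace.comap (M.W k) inferInstance ⊔ MeasurableSpace.comap (M.Y k) ⊤ ≤ M.F n :=
  le_iSup₂ (f := fun k (_ : k ∈ Set.Iic n) =>
    MeasurableSpace.comap (M.W k) inferInstance ⊔ MeasurableSpace.comap (M.Y k) ⊤) k hk

lemma F_le (n : ℕ) : M.F n ≤ ‹MeasurableSpace Ω› :=
  iSup₂_le fun k _ => sup_le (M.meas_W k).comap_le (by rintro _ ⟨A, -, rfl⟩; exact M.meas_Y k A)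

lemma measurable_W {k n : ℕ} (hk : k ≤ n) : Measurable[M.F n] (M.W k) :=
  measurable_iff_comap_le.2 (le_sup_left.trans (M.comap_le_F hk))

lemma measurable_Y {k n : ℕ} (hk : k ≤ n) : Measurable[M.F n] (M.Y k) :=
  measurable_iff_comap_le.2 ((MeasurableSpace.comap_mono le_top).trans
    (le_sup_right.trans (M.comap_le_F hk)))

lemma measurable_score (n : ℕ) : Measurable[M.F n] (M.score n) := by
  have hΦ : Measurable fun x : Finset (Fin N) × (Fin N → Fin N → ℝ) =>
      fun l => ∑ l' ∈ x.1, x.2 l l' :=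
    measurable_from_prod_countable_right fun S => measurable_pi_lambda _ fun l =>
      Finset.measurable_sum S fun l' _ => (measurable_pi_apply l').comp (measurable_pi_apply l)
  exact hΦ.comp ((M.measurable_Y (Nat.zero_le n)).prodMk (M.measurable_W le_rfl))

lemma measurable_draw (n : ℕ) : Measurable (M.draw n) :=
  (M.meas_mo n).prodMk ((M.meas_fa n).prodMk (M.meas_ka n))

lemma stronglyMeasurable_stepIncrement (n : ℕ) (p : Fin N × Fin N × Fin N) :
    StronglyMeasurable[M.F n] fun ω => stepIncrement (M.Y n ω) (M.score n ω) p :=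
  ((measurable_from_prod_countable_right (f := fun x : Finset (Fin N) × (Fin N → ℝ) =>
    stepIncrement x.1 x.2 p) fun S => measurable_stepIncrement S p).comp
    ((M.measurable_Y le_rfl).prodMk (M.measurable_score n))).stronglyMeasurable

lemma integrable_stepIncrement (n : ℕ) (p : Fin N × Fin N × Fin N) :
    Integrable (fun ω => stepIncrement (M.Y n ω) (M.score n ω) p) M.P :=
  haveI := M.isProb
  .of_bound ((M.stronglyMeasurable_stepIncrement n p).mono (M.F_le n)).aestronglyMeasurable 1
    (ae_of_all _ fun ω => norm_stepIncrement_le _ (M.score_mem_Icc n ω) p)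

/-- The conditional probability of `M.draw n = p` given `M.F n`, as prescribed by `M.law`. -/
noncomputable def drawProb (n : ℕ) (p : Fin N × Fin N × Fin N) (ω : Ω) : ℝ :=
  killWeight N s (M.Y n ω) p.2.2 / N ^ 2

lemma drawProb_nonneg (hN : 0 < N) (hs : -1 < s) (n : ℕ) (p : Fin N × Fin N × Fin N)
    (ω : Ω) : 0 ≤ M.drawProb n p ω :=
  div_nonneg (killWeight_nonneg hN hs _ _) (sq_nonneg _)

lemma drawProb_le_one (hN : 0 < N) (hs : -1 < s) (n : ℕ) (p : Fin N × Fin N × Fin N)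
    (ω : Ω) : M.drawProb n p ω ≤ 1 := by
  have hN1 : (1 : ℝ) ≤ N ^ 2 := one_le_pow₀ (by exact_mod_cast hN)
  exact div_le_one_of_le₀ ((killWeight_le_one hN hs _ _).trans hN1) (by positivity)

lemma norm_drawProb_le_one (hN : 0 < N) (hs : -1 < s) (n : ℕ) (p : Fin N × Fin N × Fin N)
    (ω : Ω) : ‖M.drawProb n p ω‖ ≤ 1 := by
  rw [Real.norm_eq_abs, abs_of_nonneg (M.drawProb_nonneg hN hs n p ω)]
  exact M.drawProb_le_one hN hs n p ω

lemma measurable_drawProb (n : ℕ) (p : Fin N × Fin N × Fin N) :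
    Measurable[M.F n] (M.drawProb n p) :=
  (measurable_of_countable fun S => killWeight N s S p.2.2 / N ^ 2).comp (M.measurable_Y le_rfl)

lemma measure_inter_draw_preimage (hN : 0 < N) (hs : -1 < s) {n : ℕ} {A : Set Ω}
    (hA : MeasurableSet[M.F n] A) (p : Fin N × Fin N × Fin N) :
    M.P (A ∩ M.draw n ⁻¹' {p}) = ∫⁻ ω in A, ENNReal.ofReal (M.drawProb n p ω) ∂M.P := by
  have := M.isProb
  have hlaw := M.law n A hA p.1 p.2.1 p.2.2
  have hdraw :
      {ω | M.mo n ω = p.1 ∧ M.fa n ω = p.2.1 ∧ M.ka n ω = p.2.2} = M.draw n ⁻¹' {p} := by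
    ext ω
    simp [draw, Prod.ext_iff]
  have hint : Integrable (M.drawProb n p) (M.P.restrict A) :=
    .of_bound ((M.measurable_drawProb n p).mono (M.F_le n) le_rfl).aestronglyMeasurable 1
      (ae_of_all _ (M.norm_drawProb_le_one hN hs n p))
  rw [hdraw] at hlaw
  rw [← ENNReal.ofReal_toReal (measure_ne_top _ _), hlaw, one_div_mul_eq_div, ← integral_div]
  exact ofReal_integral_eq_lintegral_ofReal hint (ae_of_all _ (M.drawProb_nonneg hN hs n p))

lemma trim_restrict_draw_preimage (hN : 0 < N) (hs : -1 < s) (n : ℕ)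
    (p : Fin N × Fin N × Fin N) :
    (M.P.restrict (M.draw n ⁻¹' {p})).trim (M.F_le n)
      = (M.P.withDensity fun ω => ENNReal.ofReal (M.drawProb n p ω)).trim (M.F_le n) := by
  refine @Measure.ext _ (M.F n) _ _ fun A hA => ?_
  rw [trim_measurableSet_eq _ hA, trim_measurableSet_eq _ hA,
    withDensity_apply _ (M.F_le n _ hA), Measure.restrict_apply (M.F_le n _ hA),
    M.measure_inter_draw_preimage hN hs hA]

lemma setIntegral_draw_preimage (hN : 0 < N) (hs : -1 < s) (n : ℕ)
    (p : Fin N × Fin N × Fin N) {E : Type*} [NormedAddCommGroup E] [NormedSpace ℝ E]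
    {g : Ω → E} (hg : StronglyMeasurable[M.F n] g) :
    ∫ ω in M.draw n ⁻¹' {p}, g ω ∂M.P = ∫ ω, M.drawProb n p ω • g ω ∂M.P := by
  have hdens : Measurable fun ω => ENNReal.ofReal (M.drawProb n p ω) :=
    ENNReal.measurable_ofReal.comp ((M.measurable_drawProb n p).mono (M.F_le n) le_rfl)
  calc ∫ ω in M.draw n ⁻¹' {p}, g ω ∂M.P
      = ∫ ω, g ω ∂(M.P.withDensity fun ω => ENNReal.ofReal (M.drawProb n p ω)) := by
        rw [integral_trim (M.F_le n) hg, M.trim_restrict_draw_preimage hN hs,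
          ← integral_trim (M.F_le n) hg]
    _ = ∫ ω, M.drawProb n p ω • g ω ∂M.P := by
        rw [integral_withDensity_eq_integral_toReal_smul hdens
          (ae_of_all _ fun _ => ENNReal.ofReal_lt_top)]
        simp only [ENNReal.toReal_ofReal (M.drawProb_nonneg hN hs n p _)]

theorem condExp_comp_draw (hN : 0 < N) (hs : -1 < s) (n : ℕ) {E : Type*}
    [NormedAddCommGroup E] [NormedSpace ℝ E] [CompleteSpace E]
    {h : Fin N × Fin N × Fin N → Ω → E} (hmeas : ∀ p, StronglyMeasurable[M.F n] (h p))
    (hint : ∀ p, Integrable (h p) M.P) :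
    M.P[fun ω => h (M.draw n ω) ω | M.F n] =ᵐ[M.P] fun ω => ∑ p, M.drawProb n p ω • h p ω := by
  have := M.isProb
  have hm := M.F_le n
  have hpiece (p) : MeasurableSet (M.draw n ⁻¹' {p}) :=
    M.measurable_draw n (measurableSet_singleton p)
  have hdecomp : (fun ω => h (M.draw n ω) ω)
      = fun ω => ∑ p, (M.draw n ⁻¹' {p}).indicator (h p) ω := by
    classical
    funext ω
    simp [Set.indicator_apply]
  have hint_smul (p) : Integrable (fun ω => M.drawProb n p ω • h p ω) M.P :=
    (hint p).bdd_smul 1 ((M.measurable_drawProb n p).mono hm le_rfl).aestronglyMeasurable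
      (ae_of_all _ (M.norm_drawProb_le_one hN hs n p))
  have hf : Integrable (fun ω => h (M.draw n ω) ω) M.P := by
    rw [hdecomp]
    exact integrable_finsetSum _ fun p _ => (hint p).indicator (hpiece p)
  refine (ae_eq_condExp_of_forall_setIntegral_eq hm hf
    (fun _ _ _ => (integrable_finsetSum _ fun p _ => hint_smul p).integrableOn)
    (fun A hA _ => ?_)
    (Finset.stronglyMeasurable_fun_sum _ fun p _ =>
      ((M.measurable_drawProb n p).stronglyMeasurable.smul (hmeas p))).aestronglyMeasurable).symm
  calc ∫ ω in A, ∑ p, M.drawProb n p ω • h p ω ∂M.P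
      = ∑ p, ∫ ω, M.drawProb n p ω • A.indicator (h p) ω ∂M.P := by
        rw [integral_finsetSum _ fun p _ => (hint_smul p).restrict]
        refine Finset.sum_congr rfl fun p _ => ?_
        simp only [← Set.indicator_smul_apply, integral_indicator (hm _ hA)]
    _ = ∑ p, ∫ ω in A, (M.draw n ⁻¹' {p}).indicator (h p) ω ∂M.P := by
        refine Finset.sum_congr rfl fun p _ => ?_
        rw [← M.setIntegral_draw_preimage hN hs n p ((hmeas p).indicator hA),
          setIntegral_indicator (hm _ hA), setIntegral_indicator (hpiece p), Set.inter_comm]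
    _ = ∫ ω in A, h (M.draw n ω) ω ∂M.P := by
        rw [hdecomp, integral_finsetSum _ fun p _ => ((hint p).indicator (hpiece p)).restrict]

end MoranModel

/-- The rescaled triplet `Zₙ = (Yₙ/N, Uₙ/N, Vₙ/N)` satisfies
`‖Z_{n+1} − Zₙ‖ ≤ √3/N` almost surely, and
`𝔼(Z_{n+1} − Zₙ | ℱₙ) = (1/N) g(Zₙ)` where `g` is the drift of the limiting
dynamical system. -/
theorem moran_rescaled_increments
    (N : ℕ) (hN : 2 ≤ N) (s : ℝ) (hs : 0 < s)
    (Ω : Type) [MeasurableSpace Ω] (M : MoranModel N s Ω) :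
    (∀ᵐ ω ∂M.P, ∀ n : ℕ, norm3 (M.Z (n + 1) ω - M.Z n ω) ≤ Real.sqrt 3 / N) ∧
    (∀ n : ℕ,
      MeasureTheory.condExp (M.F n) M.P (fun ω => M.Z (n + 1) ω - M.Z n ω)
        =ᵐ[M.P] fun ω => (1 / (N : ℝ)) • gdrift s (M.Z n ω)) := by
  refine ⟨ae_of_all _ fun ω n => M.norm3_Z_succ_sub_le n ω, fun n => ?_⟩
  have hN' : 0 < N := by omega
  have hs' : -1 < s := by linarith
  have hZ : (fun ω => M.Z (n + 1) ω - M.Z n ω)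
      = (1 / N : ℝ) • fun ω => stepIncrement (M.Y n ω) (M.score n ω) (M.draw n ω) :=
    funext (M.Z_succ_sub n)
  rw [hZ]
  filter_upwards [condExp_smul (μ := M.P) (1 / N : ℝ)
      (fun ω => stepIncrement (M.Y n ω) (M.score n ω) (M.draw n ω)) (M.F n),
    M.condExp_comp_draw hN' hs' n (M.stronglyMeasurable_stepIncrement n)
      (M.integrable_stepIncrement n)] with ω hsmul hdraw
  rw [hsmul, Pi.smul_apply, hdraw]
  exact congrArg _ (sum_killWeight_smul_stepIncrement hN' hs' _ _)
end

section
/- Let s > 0, a ∈ (0,1), and let (y_t, u_t, v_t)_{t≥0} be the unique solution of the system y' = s y(1−y)/(y+(1+s)(1−y)), u' = u/2 + (u+v)y/2 − u/(y+(1+s)(1−y)), v' = v/2 + (u+v)(1−y)/2 − (1+s)v/(y+(1+s)(1−y)) with initial condition (a, a, 0). For any b ∈ [a,1) there exists a unique r_b ≥ 0 with y_{r_b} = b, and at this time u_{r_b} = b · a^{(1+s)/(2s)} (1−a)^{−1/(2s)} [ (1−b)^{1/(2s)} b^{−(1+s)/(2s)} + I(b) ] and v_{r_b} = (1−b) ·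 a^{(1+s)/(2s)} (1−a)^{−1/(2s)} I(b), where I(b) = ∫_a^b (1−x)^{1/(2s)} x^{−(1+s)/(2s)} (1/2 + 1/(2s(1−x))) dx. -/
open MeasureTheory Filter

/-- A solution of the dynamical system on `[0,∞)` with values in `[0,1]³` and
initial condition `(a, a, 0)`. -/
def IsSolSys (s a : ℝ) (z : ℝ → ℝ × ℝ × ℝ) : Prop :=
  z 0 = (a, a, 0) ∧ ∀ t ∈ Set.Ici (0 : ℝ),
    z t ∈ Set.Icc (0 : ℝ) 1 ×ˢ Set.Icc (0 : ℝ) 1 ×ˢ Set.Icc (0 : ℝ) 1 ∧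
    HasDerivWithinAt z (gdrift s (z t)) (Set.Ici 0) t

/-- The integral `∫_a^y (1−x)^{1/(2s)} x^{−(1+s)/(2s)} (1/2 + 1/(2s(1−x))) dx`. -/
noncomputable def intI (s a y : ℝ) : ℝ :=
  ∫ x in a..y, (1 - x) ^ (1 / (2 * s)) / x ^ ((1 + s) / (2 * s)) *
    (1 / 2 + 1 / (2 * s) * (1 / (1 - x)))

/-- `u` expressed as a function of `y`:
`u = y ⬝ a^{(1+s)/(2s)} (1−a)^{−1/(2s)} [(1−y)^{1/(2s)} y^{−(1+s)/(2s)} + ∫_a^y ⋯ dx]`. -/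
noncomputable def uval (s a y : ℝ) : ℝ :=
  y * (a ^ ((1 + s) / (2 * s)) / (1 - a) ^ (1 / (2 * s))) *
    ((1 - y) ^ (1 / (2 * s)) / y ^ ((1 + s) / (2 * s)) + intI s a y)

/-- `v` expressed as a function of `y`:
`v = (1−y) ⬝ a^{(1+s)/(2s)} (1−a)^{−1/(2s)} ∫_a^y ⋯ dx`. -/
noncomputable def vval (s a y : ℝ) : ℝ :=
  (1 - y) * (a ^ ((1 + s) / (2 * s)) / (1 - a) ^ (1 / (2 * s))) * intI s a y

/-! Since `y' = yDrift s y > 0` on `(0, 1)`, the component `y` is strictly increasing while it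
stays below `1`, and on `[a, b]` its speed is at least `s a (1 - b) / (1 + s)`; hence it reaches
every level `b ∈ [a, 1)` exactly once. Along `y`, the pair `(u, v)` solves the linear ODE
`q' = linDrift s y q`, which is `(3 + s)`-Lipschitz in `q` uniformly in time. Differentiating the
closed form in `y` shows that `(uval, vval) ∘ y` solves the same ODE; both start at `(a, 0)`, so
they coincide by uniqueness of ODE solutions. -/

open Set

-- `gdrift s p = (yDrift s p.1, linDrift s p.1 p.2)` holds by `rfl`.
noncomputable def yDrift (s y : ℝ) : ℝ := s * y * (1 - y) / (y + (1 + s) * (1 - y))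

noncomputable def linDrift (s y : ℝ) (q : ℝ × ℝ) : ℝ × ℝ :=
  (q.1 / 2 + (q.1 + q.2) * y / 2 - q.1 / (y + (1 + s) * (1 - y)),
   q.2 / 2 + (q.1 + q.2) * (1 - y) / 2 - (1 + s) * q.2 / (y + (1 + s) * (1 - y)))

section Drift

variable {s y : ℝ}

theorem one_le_add_mul_one_sub (hs : 0 ≤ s) (hy : y ≤ 1) : 1 ≤ y + (1 + s) * (1 - y) := by
  nlinarith

theorem yDrift_nonneg (hs : 0 ≤ s) (hy : y ∈ Icc 0 1) : 0 ≤ yDrift s y :=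
  div_nonneg (mul_nonneg (mul_nonneg hs hy.1) (sub_nonneg.2 hy.2))
    (zero_le_one.trans (one_le_add_mul_one_sub hs hy.2))

theorem yDrift_pos (hs : 0 < s) (hy : y ∈ Ioo 0 1) : 0 < yDrift s y :=
  div_pos (mul_pos (mul_pos hs hy.1) (sub_pos.2 hy.2))
    (zero_lt_one.trans_le (one_le_add_mul_one_sub hs.le hy.2.le))

theorem le_yDrift_of_mem_Icc {a b : ℝ} (hs : 0 ≤ s) (ha : 0 ≤ a) (hb : b ≤ 1)
    (hy : y ∈ Icc a b) : s * a * (1 - b) / (1 + s) ≤ yDrift s y := by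
  have hy0 : 0 ≤ y := ha.trans hy.1
  have hy1 : y ≤ 1 := hy.2.trans hb
  refine div_le_div₀ (by have := yDrift_nonneg hs ⟨hy0, hy1⟩; positivity) ?_
    (zero_lt_one.trans_le (one_le_add_mul_one_sub hs hy1)) (by nlinarith)
  rw [mul_assoc, mul_assoc]
  exact mul_le_mul_of_nonneg_left
    (mul_le_mul hy.1 (by linarith [hy.2]) (by linarith) hy0) hs

theorem linDrift_sub (s y : ℝ) (p q : ℝ × ℝ) :
    linDrift s y (p - q) = linDrift s y p - linDrift s y q := by
  simp only [linDrift, Prod.fst_sub, Prod.snd_sub, Prod.mk_sub_mk]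
  congr 1 <;> ring

theorem norm_linDrift_le (hs : 0 ≤ s) (hy : y ∈ Icc 0 1) (q : ℝ × ℝ) :
    ‖linDrift s y q‖ ≤ (3 + s) * ‖q‖ := by
  have hD : 0 < y + (1 + s) * (1 - y) := zero_lt_one.trans_le (one_le_add_mul_one_sub hs hy.2)
  have hdiv : ∀ x : ℝ, |x / (y + (1 + s) * (1 - y))| ≤ |x| := fun x => by
    rw [abs_div, abs_of_pos hD]
    exact div_le_self (abs_nonneg x) (one_le_add_mul_one_sub hs hy.2)
  have h1 := abs_le.1 (norm_fst_le q)
  have h2 := abs_le.1 (norm_snd_le q)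
  have h1D := abs_le.1 ((hdiv q.1).trans (norm_fst_le q))
  have h2D := abs_le.1 ((hdiv q.2).trans (norm_snd_le q))
  rw [norm_prod_le_iff]
  simp only [linDrift, Real.norm_eq_abs, abs_le, mul_div_assoc (1 + s)]
  refine ⟨⟨?_, ?_⟩, ?_, ?_⟩ <;> nlinarith [hy.1, hy.2]

theorem lipschitzWith_linDrift (hs : 0 ≤ s) (hy : y ∈ Icc 0 1) :
    LipschitzWith ⟨3 + s, by positivity⟩ (linDrift s y) :=
  lipschitzWith_iff_norm_sub_le.2 fun p q => by
    rw [← linDrift_sub]; exact norm_linDrift_le hs hy (p - q)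

end Drift

noncomputable def powerWeight (s x : ℝ) : ℝ := (1 - x) ^ (1 / (2 * s)) / x ^ ((1 + s) / (2 * s))

noncomputable def uvval (s a y : ℝ) : ℝ × ℝ := (uval s a y, vval s a y)

section ClosedForm

variable {s a x : ℝ}

theorem hasDerivAt_powerWeight (hx : x ∈ Ioo 0 1) :
    HasDerivAt (powerWeight s)
      (-powerWeight s x * (1 / (2 * s) / (1 - x) + (1 + s) / (2 * s) / x)) x := by
  have hx1 : 1 - x ≠ 0 := (sub_pos.2 hx.2).ne'
  have hA : 0 < x ^ ((1 + s) / (2 * s)) := Real.rpow_pos_of_pos hx.1 _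
  have hnum := (Real.hasDerivAt_rpow_const (p := 1 / (2 * s)) (Or.inl hx1)).comp x
    ((hasDerivAt_id x).const_sub 1)
  have hden := Real.hasDerivAt_rpow_const (p := (1 + s) / (2 * s)) (Or.inl hx.1.ne')
  refine (hnum.div hden hA.ne').congr_deriv ?_
  rw [Function.comp_apply, Real.rpow_sub_one hx1, Real.rpow_sub_one hx.1.ne', powerWeight]
  field_simp
  ring

theorem continuousOn_intI_integrand :
    ContinuousOn (fun x => powerWeight s x * (1 / 2 + 1 / (2 * s) * (1 / (1 - x))))
      (Ioo 0 1) := by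
  have hx1 : ∀ x ∈ Ioo (0 : ℝ) 1, 1 - x ≠ 0 := fun x hx => (sub_pos.2 hx.2).ne'
  refine ContinuousOn.mul (ContinuousOn.div ?_ ?_ ?_) (by fun_prop (disch := assumption))
  · exact (continuousOn_const.sub continuousOn_id).rpow_const fun x hx => Or.inl (hx1 x hx)
  · exact continuousOn_id.rpow_const fun x hx => Or.inl hx.1.ne'
  · exact fun x hx => (Real.rpow_pos_of_pos hx.1 _).ne'

theorem hasDerivAt_intI (ha : a ∈ Ioo 0 1) (hx : x ∈ Ioo 0 1) :
    HasDerivAt (intI s a) (powerWeight s x * (1 / 2 + 1 / (2 * s) * (1 / (1 - x)))) x :=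
  intervalIntegral.integral_hasDerivAt_right
    (continuousOn_intI_integrand.mono (ordConnected_Ioo.uIcc_subset ha hx)).intervalIntegrable
    (continuousOn_intI_integrand.stronglyMeasurableAtFilter isOpen_Ioo x hx)
    (continuousOn_intI_integrand.continuousAt (isOpen_Ioo.mem_nhds hx))

theorem uvval_eq (s a y : ℝ) :
    uvval s a y =
      (y * (a ^ ((1 + s) / (2 * s)) / (1 - a) ^ (1 / (2 * s))) * (powerWeight s y + intI s a y),
        (1 - y) * (a ^ ((1 + s) / (2 * s)) / (1 - a) ^ (1 / (2 * s))) * intI s a y) :=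
  rfl

theorem hasDerivAt_uvval (hs : 0 < s) (ha : a ∈ Ioo 0 1) (hx : x ∈ Ioo 0 1) :
    HasDerivAt (uvval s a) ((yDrift s x)⁻¹ • linDrift s x (uvval s a x)) x := by
  have hI := hasDerivAt_intI (s := s) ha hx
  have hu := ((hasDerivAt_id' x).mul_const
    (a ^ ((1 + s) / (2 * s)) / (1 - a) ^ (1 / (2 * s)))).mul
    ((hasDerivAt_powerWeight (s := s) hx).add hI)
  have hv := (((hasDerivAt_id' x).const_sub 1).mul_const
    (a ^ ((1 + s) / (2 * s)) / (1 - a) ^ (1 / (2 * s)))).mul hI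
  refine (hu.prodMk hv).congr_deriv ?_
  have hx1 : 1 - x ≠ 0 := (sub_pos.2 hx.2).ne'
  have hD : x + (1 + s) * (1 - x) ≠ 0 :=
    (zero_lt_one.trans_le (one_le_add_mul_one_sub hs.le hx.2.le)).ne'
  have hx0 := hx.1.ne'
  have hs0 := hs.ne'
  rw [uvval_eq]
  simp only [yDrift, linDrift, Prod.smul_mk, smul_eq_mul, Prod.mk.injEq, Pi.add_apply]
  generalize a ^ ((1 + s) / (2 * s)) / (1 - a) ^ (1 / (2 * s)) = C
  generalize powerWeight s x = P
  generalize intI s a x = I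
  generalize hDdef : x + (1 + s) * (1 - x) = D at hD ⊢
  constructor <;> field_simp <;> rw [← hDdef] <;> ring

theorem uvval_self (ha : a ∈ Ioo 0 1) : uvval s a a = (a, 0) := by
  have hA : a ^ ((1 + s) / (2 * s)) ≠ 0 := (Real.rpow_pos_of_pos ha.1 _).ne'
  have hB : (1 - a) ^ (1 / (2 * s)) ≠ 0 := (Real.rpow_pos_of_pos (sub_pos.2 ha.2) _).ne'
  simp only [uvval, uval, vval, intI, intervalIntegral.integral_same, add_zero, mul_zero,
    Prod.mk.injEq, and_true]
  rw [mul_assoc, div_mul_div_comm, mul_comm ((1 - a) ^ _), div_self (mul_ne_zero hA hB), mul_one]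

end ClosedForm

theorem exists_eq_of_le_hasDerivWithinAt {f f' : ℝ → ℝ} {b c : ℝ} (hc : 0 < c)
    (hf : ∀ t ∈ Ici (0 : ℝ), HasDerivWithinAt f (f' t) (Ici 0) t) (h0 : f 0 ≤ b)
    (hf' : ∀ t ∈ Ici (0 : ℝ), f t < b → c ≤ f' t) : ∃ t, 0 ≤ t ∧ f t = b := by
  by_contra! hne
  have hcont : ContinuousOn f (Ici 0) := fun t ht => (hf t ht).continuousWithinAt
  have hlt : ∀ t ∈ Ici (0 : ℝ), f t < b := fun t ht => by
    by_contra! hle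
    obtain ⟨r, hr, hrb⟩ :=
      intermediate_value_Icc ht (hcont.mono Icc_subset_Ici_self) ⟨h0, hle⟩
    exact hne r hr.1 hrb
  have hmono : MonotoneOn (fun t => f t - c * t) (Ici 0) := by
    refine monotoneOn_of_hasDerivWithinAt_nonneg (f' := fun t => f' t - c) (convex_Ici 0)
      (hcont.sub (by fun_prop)) (fun t ht => ?_) (fun t ht => ?_) <;> rw [interior_Ici] at ht
    · rw [interior_Ici]
      exact ((hf t ht.out.le).mono Ioi_subset_Ici_self).sub
        (((hasDerivWithinAt_id t _).const_mul c).congr_deriv (mul_one c))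
    · exact sub_nonneg.2 (hf' t ht.out.le (hlt t ht.out.le))
  have hT : 0 ≤ (b - f 0) / c := div_nonneg (by linarith) hc.le
  have hgrowth := hmono self_mem_Ici hT hT
  simp only [mul_zero, sub_zero, mul_div_cancel₀ _ hc.ne'] at hgrowth
  linarith [hlt _ hT]

namespace IsSolSys

variable {s a r t : ℝ} {z : ℝ → ℝ × ℝ × ℝ}

theorem fst_mem_Icc (hz : IsSolSys s a z) (ht : 0 ≤ t) : (z t).1 ∈ Icc 0 1 :=
  ((hz.2 t ht).1).1

theorem hasDerivWithinAt_fst (hz : IsSolSys s a z) (ht : 0 ≤ t) :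
    HasDerivWithinAt (fun t => (z t).1) (yDrift s (z t).1) (Ici 0) t :=
  (hasFDerivAt_fst (𝕜 := ℝ) (p := z t)).comp_hasDerivWithinAt t (hz.2 t ht).2

theorem hasDerivWithinAt_snd (hz : IsSolSys s a z) (ht : 0 ≤ t) :
    HasDerivWithinAt (fun t => (z t).2) (linDrift s (z t).1 (z t).2) (Ici 0) t :=
  (hasFDerivAt_snd (𝕜 := ℝ) (p := z t)).comp_hasDerivWithinAt t (hz.2 t ht).2

theorem monotoneOn_fst (hz : IsSolSys s a z) (hs : 0 ≤ s) :
    MonotoneOn (fun t => (z t).1) (Ici 0) := by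
  refine monotoneOn_of_hasDerivWithinAt_nonneg (f' := fun t => yDrift s (z t).1) (convex_Ici 0)
    (fun t ht => (hz.hasDerivWithinAt_fst ht).continuousWithinAt) (fun t ht => ?_)
    (fun t ht => ?_) <;> rw [interior_Ici] at ht
  · rw [interior_Ici]
    exact (hz.hasDerivWithinAt_fst ht.out.le).mono Ioi_subset_Ici_self
  · exact yDrift_nonneg hs (hz.fst_mem_Icc ht.out.le)

theorem fst_mem_Icc_of_mem_Icc (hz : IsSolSys s a z) (hs : 0 ≤ s) (ht : t ∈ Icc 0 r) :
    (z t).1 ∈ Icc a (z r).1 := by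
  have h0 : (z 0).1 = a := by rw [hz.1]
  constructor
  · exact h0 ▸ hz.monotoneOn_fst hs self_mem_Ici ht.1 ht.1
  · exact hz.monotoneOn_fst hs ht.1 (ht.1.trans ht.2) ht.2

theorem strictMonoOn_fst (hz : IsSolSys s a z) (hs : 0 < s) (ha : 0 < a) (hr : (z r).1 < 1) :
    StrictMonoOn (fun t => (z t).1) (Icc 0 r) := by
  refine strictMonoOn_of_hasDerivWithinAt_pos (f' := fun t => yDrift s (z t).1)
    (convex_Icc 0 r)
    (fun t ht => (hz.hasDerivWithinAt_fst ht.1).continuousWithinAt.mono Icc_subset_Ici_self)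
    (fun t ht => ?_) (fun t ht => ?_) <;> rw [interior_Icc] at ht
  · rw [interior_Icc]
    exact (hz.hasDerivWithinAt_fst ht.1.le).mono (Ioo_subset_Icc_self.trans Icc_subset_Ici_self)
  · have hmem := hz.fst_mem_Icc_of_mem_Icc hs.le (Ioo_subset_Icc_self ht)
    exact yDrift_pos hs ⟨ha.trans_le hmem.1, hmem.2.trans_lt hr⟩

theorem eq_of_fst_eq (hz : IsSolSys s a z) (hs : 0 < s) (ha : 0 < a) {r' : ℝ} (hr : 0 ≤ r)
    (hr' : 0 ≤ r') (h1 : (z r).1 < 1) (h : (z r).1 = (z r').1) : r = r' := by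
  have hmax : (z (max r r')).1 < 1 := by
    rcases max_choice r r' with hm | hm <;> rw [hm]
    exacts [h1, h ▸ h1]
  exact (hz.strictMonoOn_fst hs ha hmax).injOn ⟨hr, le_max_left _ _⟩
    ⟨hr', le_max_right _ _⟩ h

theorem exists_fst_eq (hz : IsSolSys s a z) (hs : 0 < s) (ha : 0 < a) {b : ℝ}
    (hb : b ∈ Ico a 1) : ∃ r, 0 ≤ r ∧ (z r).1 = b := by
  refine exists_eq_of_le_hasDerivWithinAt (c := s * a * (1 - b) / (1 + s)) (by
    have := sub_pos.2 hb.2; positivity) (fun t ht => hz.hasDerivWithinAt_fst ht)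
    (by rw [hz.1]; exact hb.1) fun t ht htb => le_yDrift_of_mem_Icc hs.le ha.le hb.2.le ?_
  exact ⟨(hz.fst_mem_Icc_of_mem_Icc hs.le ⟨ht.out, le_rfl⟩).1, htb.le⟩

theorem snd_eq_uvval (hz : IsSolSys s a z) (hs : 0 < s) (ha : a ∈ Ioo 0 1) (hr : 0 ≤ r)
    (hr1 : (z r).1 < 1) : (z r).2 = uvval s a (z r).1 := by
  have hY : ∀ t ∈ Icc 0 r, (z t).1 ∈ Ioo 0 1 := fun t ht =>
    have h := hz.fst_mem_Icc_of_mem_Icc hs.le ht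
    ⟨ha.1.trans_le h.1, h.2.trans_lt hr1⟩
  have hf : ∀ t ∈ Icc 0 r, HasDerivWithinAt (fun t => (z t).2)
      (linDrift s (z t).1 (z t).2) (Ici 0) t := fun t ht => hz.hasDerivWithinAt_snd ht.1
  have hg : ∀ t ∈ Icc 0 r, HasDerivWithinAt (fun t => uvval s a (z t).1)
      (linDrift s (z t).1 (uvval s a (z t).1)) (Ici 0) t := fun t ht => by
    have h := (hasDerivAt_uvval hs ha (hY t ht)).scomp_hasDerivWithinAt t
      (hz.hasDerivWithinAt_fst ht.1)
    rwa [smul_inv_smul₀ (yDrift_pos hs (hY t ht)).ne'] at h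
  refine ODE_solution_unique_of_mem_Icc_right (v := fun t => linDrift s (z t).1)
    (s := fun _ => univ) (fun t ht => (lipschitzWith_linDrift hs.le
      (hz.fst_mem_Icc ht.1)).lipschitzOnWith)
    (fun t ht => (hf t ht).continuousWithinAt.mono Icc_subset_Ici_self)
    (fun t ht => (hf t (Ico_subset_Icc_self ht)).mono (Ici_subset_Ici.2 ht.1))
    (fun _ _ => mem_univ _)
    (fun t ht => (hg t ht).continuousWithinAt.mono Icc_subset_Ici_self)
    (fun t ht => (hg t (Ico_subset_Icc_self ht)).mono (Ici_subset_Ici.2 ht.1))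
    (fun _ _ => mem_univ _) ?_ ⟨hr, le_rfl⟩
  rw [hz.1, uvval_self ha]

end IsSolSys

/-- For the solution of the dynamical system started from `(a, a, 0)`: for any
`b ∈ [a, 1)` there is a unique time `r_b ≥ 0` at which `y` reaches `b`, and at this time
`u_{r_b} = b ⬝ a^{(1+s)/(2s)}(1−a)^{−1/(2s)}[(1−b)^{1/(2s)} b^{−(1+s)/(2s)} + I(b)]` and
`v_{r_b} = (1−b) ⬝ a^{(1+s)/(2s)}(1−a)^{−1/(2s)} I(b)`, where
`I(b) = ∫_a^b (1−x)^{1/(2s)} x^{−(1+s)/(2s)}(1/2 + 1/(2s(1−x))) dx`. -/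
theorem dynamical_system_value_at_level_b
    (s a : ℝ) (hs : 0 < s) (ha : a ∈ Set.Ioo (0 : ℝ) 1)
    (z : ℝ → ℝ × ℝ × ℝ) (hz : IsSolSys s a z) :
    ∀ b ∈ Set.Ico a 1,
      (∃! r : ℝ, 0 ≤ r ∧ (z r).1 = b) ∧
      (∀ r : ℝ, 0 ≤ r → (z r).1 = b →
        (z r).2.1 = uval s a b ∧ (z r).2.2 = vval s a b) := by
  intro b hb
  obtain ⟨r, hr, hrb⟩ := hz.exists_fst_eq hs ha.1 hb
  refine ⟨⟨r, ⟨hr, hrb⟩, fun r' ⟨hr', hr'b⟩ => ?_⟩, fun r' hr' hr'b => ?_⟩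
  · exact hz.eq_of_fst_eq hs ha.1 hr' hr (hr'b ▸ hb.2) (hr'b.trans hrb.symm)
  · have h := hz.snd_eq_uvval hs ha hr' (hr'b ▸ hb.2)
    rw [hr'b] at h
    exact Prod.ext_iff.1 h
end
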